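/- Every word w over {a,b,c,d} can be rewritten, using the identities a²=b²=c²=d²=1, bc=cb=d, cd=dc=b, db=bd=c, to a unique reduced word, where a word is reduced if it contains none of aa, bb, cc, dd, bc, cb, bd, db, cd, dc as a factor. -/

import Mathlib

/-- The alphabet `{a, b, c, d}` of generators of the Grigorchuk group. -/
inductive Glet : Type
  | a | b | c | d
deriving DecidableEq

open Glet

/-- The reducing rewriting rules induced by the relations `a²=b²=c²=d²=1`,
`bc=cb=d`, `cd=dc=b`, `db=bd=c`: a square `xx` is replaced by the empty word,
and a factor `xy` with `x ≠ y`, `x, y ∈ {b,c,d}` by the third letter of `{b,c,d}`. -/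
inductive GrigRule : List Glet → List Glet → Prop
  | aa : GrigRule [a, a] []
  | bb : GrigRule [b, b] []
  | cc : GrigRule [c, c] []
  | dd : GrigRule [d, d] []
  | bc : GrigRule [b, c] [d]
  | cb : GrigRule [c, b] [d]
  | cd : GrigRule [c, d] [b]
  | dc : GrigRule [d, c] [b]
  | db : GrigRule [d, b] [c]
  | bd : GrigRule [b, d] [c]

/-- One reducing rewrite step: replace a factor which is a left-hand side of a
rule by the corresponding right-hand side. -/
def GrigRed (w w' : List Glet) : Prop :=
  ∃ (u v l r : List Glet), GrigRule l r ∧ w = u ++ l ++ v ∧ w' = u ++ r ++ v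

/-- A word is reduced if it contains none of
`aa, bb, cc, dd, bc, cb, bd, db, cd, dc` as a factor, i.e. no factor `xy` with
`x = y` or with both `x` and `y` in `{b,c,d}`. -/
def GrigReduced (w : List Glet) : Prop :=
  ∀ (u v : List Glet) (x y : Glet), w = u ++ [x, y] ++ v → ¬(x = y ∨ (x ≠ a ∧ y ≠ a))

/-!
Van der Waerden's trick: pushing a letter onto a reduced word, and contracting the first two
letters when they form a left-hand side of a rule, gives again a reduced word. Folding this over
`w` produces a reduced word reachable from `w`. Both sides of every rule act identically on
reduced words, so the fold is invariant under rewriting; it also fixes reduced words, so every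
reduced word reachable from `w` equals it.
-/

namespace Glet

/-- The reduced form of the two-letter word `xy`. -/
def contract : Glet → Glet → List Glet
  | a, a | b, b | c, c | d, d => []
  | b, c | c, b => [d]
  | c, d | d, c => [b]
  | b, d | d, b => [c]
  | x, y => [x, y]

def IsAllowedPair (x y : Glet) : Prop := ¬(x = y ∨ (x ≠ a ∧ y ≠ a))

instance (x y : Glet) : Decidable (IsAllowedPair x y) := inferInstanceAs (Decidable (¬_))

theorem contract_of_isAllowedPair (x y : Glet) (h : IsAllowedPair x y) :
    contract x y = [x, y] := by
  cases x <;> cases y <;> first | rfl | exact absurd h (by decide)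

theorem grigRule_contract_of_not_isAllowedPair (x y : Glet) (h : ¬IsAllowedPair x y) :
    GrigRule [x, y] (contract x y) := by
  cases x <;> cases y <;> first | exact absurd (by decide) h | constructor

end Glet

open Glet

theorem grigReduced_iff_isChain {w : List Glet} : GrigReduced w ↔ w.IsChain IsAllowedPair := by
  rw [List.isChain_iff_forall_rel_of_append_cons_cons]
  constructor
  · rintro h x y u v rfl
    exact h u v x y (by simp)
  · rintro h u v x y rfl
    exact h (l₁ := u) (l₂ := v) (by simp)

def pushLetter (x : Glet) : List Glet → List Glet
  | [] => [x]
  | y :: t => contract x y ++ t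

def normalForm (w : List Glet) : List Glet := w.foldr pushLetter []

theorem pushLetter_of_isChain {x : Glet} {t : List Glet} (h : (x :: t).IsChain IsAllowedPair) :
    pushLetter x t = x :: t := by
  cases t with
  | nil => rfl
  | cons y t => simp [pushLetter, contract_of_isAllowedPair x y (List.isChain_cons_cons.mp h).1]

theorem isChain_pushLetter (x : Glet) {t : List Glet} (h : t.IsChain IsAllowedPair) :
    (pushLetter x t).IsChain IsAllowedPair := by
  rcases t with _ | ⟨y, _ | ⟨z, t⟩⟩
  · exact List.isChain_singleton x
  · cases x <;> cases y <;> decide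
  · obtain ⟨hyz, hzt⟩ := List.isChain_cons_cons.mp h
    cases x <;> cases y <;> cases z <;> simp_all [pushLetter, contract, IsAllowedPair]

theorem isChain_normalForm (w : List Glet) : (normalForm w).IsChain IsAllowedPair := by
  induction w with
  | nil => exact List.isChain_nil
  | cons x t ih => exact isChain_pushLetter x ih

theorem normalForm_of_isChain {w : List Glet} (h : w.IsChain IsAllowedPair) :
    normalForm w = w := by
  induction w with
  | nil => rfl
  | cons x t ih =>
    change pushLetter x (normalForm t) = x :: t
    rw [ih h.tail, pushLetter_of_isChain h]

/-- `pushLetter` only inspects the first two letters of a reduced word, so this is a finite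
check. -/
theorem foldr_pushLetter_eq_of_grigRule {l r : List Glet} (hlr : GrigRule l r) {m : List Glet}
    (hm : m.IsChain IsAllowedPair) : l.foldr pushLetter m = r.foldr pushLetter m := by
  rcases m with _ | ⟨z, _ | ⟨z', t⟩⟩
  · cases hlr <;> rfl
  · cases hlr <;> cases z <;> rfl
  · have hzz' := (List.isChain_cons_cons.mp hm).1
    cases hlr <;> cases z <;> cases z' <;> simp_all [pushLetter, contract, IsAllowedPair]

theorem normalForm_eq_of_grigRed {w w' : List Glet} (h : GrigRed w w') :
    normalForm w = normalForm w' := by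
  obtain ⟨u, v, l, r, hlr, rfl, rfl⟩ := h
  simp only [normalForm, List.append_assoc, List.foldr_append]
  exact congrArg (List.foldr pushLetter · u)
    (foldr_pushLetter_eq_of_grigRule hlr (isChain_normalForm v))

theorem normalForm_eq_of_reflTransGen {w w' : List Glet}
    (h : Relation.ReflTransGen GrigRed w w') : normalForm w = normalForm w' := by
  induction h with
  | refl => rfl
  | tail _ hstep ih => rw [ih, normalForm_eq_of_grigRed hstep]

theorem grigRed_cons (x : Glet) {w w' : List Glet} (h : GrigRed w w') :
    GrigRed (x :: w) (x :: w') := by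
  obtain ⟨u, v, l, r, hlr, rfl, rfl⟩ := h
  exact ⟨x :: u, v, l, r, hlr, rfl, rfl⟩

theorem reflTransGen_pushLetter (x : Glet) (t : List Glet) :
    Relation.ReflTransGen GrigRed (x :: t) (pushLetter x t) := by
  rcases t with _ | ⟨y, t⟩
  · rfl
  by_cases hxy : IsAllowedPair x y
  · simp [pushLetter, contract_of_isAllowedPair x y hxy, Relation.ReflTransGen.refl]
  · exact .single ⟨[], t, _, _, grigRule_contract_of_not_isAllowedPair x y hxy, rfl, rfl⟩

theorem reflTransGen_normalForm (w : List Glet) :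
    Relation.ReflTransGen GrigRed w (normalForm w) := by
  induction w with
  | nil => rfl
  | cons x t ih =>
    exact (ih.lift (x :: ·) fun _ _ => grigRed_cons x).trans
      (reflTransGen_pushLetter x (normalForm t))

/-- every word over `{a,b,c,d}` rewrites, via the identities
`a²=b²=c²=d²=1`, `bc=cb=d`, `cd=dc=b`, `db=bd=c`, to a unique reduced word. -/
theorem stmt_7 (w : List Glet) :
    ∃! w' : List Glet, Relation.ReflTransGen GrigRed w w' ∧ GrigReduced w' := by
  refine ⟨normalForm w, ⟨reflTransGen_normalForm w, grigReduced_iff_isChain.mpr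
    (isChain_normalForm w)⟩, ?_⟩
  rintro w' ⟨hww', hw'⟩
  calc w' = normalForm w' := (normalForm_of_isChain (grigReduced_iff_isChain.mp hw')).symm
    _ = normalForm w := (normalForm_eq_of_reflTransGen hww').symm
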